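/- Let P be a countable bounded locally finite quasisemilattice with the property that for every finite sub-bqsl Q₁ of P (via a bqsl embedding f : Q₁ → P) and every one-point bqsl extension g : Q₁ → Q₂ (with |Q₂| = |Q₁| + 1), there is a bqsl embedding h : Q₂ → P with h ∘ g = f. Then P embeds (as a bqsl) every countable bounded locally finite quasisemilattice. -/

import Mathlib

/-- The set of maximal lower bounds of `p` and `q` in a poset. -/
def MLB {α : Type} [PartialOrder α] (p q : α) : Set α :=
  {r | r ≤ p ∧ r ≤ q ∧ ∀ s : α, s ≤ p → s ≤ q → r ≤ s → r = s}

/-- A quasisemilattice: every pair of elements has finitely many maximal lower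
bounds, and every common lower bound lies below one of them. -/
def IsQSL (α : Type) [PartialOrder α] : Prop :=
  ∀ p q : α, (MLB p q).Finite ∧ ∀ r : α, r ≤ p → r ≤ q → ∃ s ∈ MLB p q, r ≤ s

/-- Locally finite: every finite subset is contained in a finite subset closed
under taking maximal lower bounds of pairs. -/
def IsLocFinQSL (α : Type) [PartialOrder α] : Prop :=
  ∀ S : Set α, S.Finite →
    ∃ T : Set α, T.Finite ∧ S ⊆ T ∧ ∀ p ∈ T, ∀ q ∈ T, MLB p q ⊆ T

/-- A bqsl embedding: an order-embedding sending minimum to minimum and mapping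
the maximal lower bounds of each pair onto the maximal lower bounds of the
images. -/
def IsBqslEmb {α β : Type} [PartialOrder α] [OrderBot α] [PartialOrder β]
    [OrderBot β] (f : α → β) : Prop :=
  (∀ a b : α, f a ≤ f b ↔ a ≤ b) ∧ f ⊥ = ⊥ ∧
    ∀ p q : α, f '' MLB p q = MLB (f p) (f q)

/-!
Enumerate `X` and build an increasing chain of finite subsets, closed under maximal lower
bounds, that exhausts `X`, together with compatible bqsl embeddings into `P`; their union is
the required embedding. To pass from a finite closed `S` to a finite closed `T ⊇ S`, note that
removing a maximal element of `T \ S` from `T` keeps it closed: such an element can only be a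
maximal lower bound of two points of `S`, which lies in `S`. So `T` is reached from `S` by
one-point extensions, each of which `P` absorbs by hypothesis.
-/

open Set

def OnePointExtensionProperty (P : Type) [PartialOrder P] [OrderBot P] : Prop :=
  ∀ (Q₁ Q₂ : Type) [Fintype Q₁] [PartialOrder Q₁] [OrderBot Q₁]
    [Fintype Q₂] [PartialOrder Q₂] [OrderBot Q₂],
    IsQSL Q₁ → IsQSL Q₂ →
    Fintype.card Q₂ = Fintype.card Q₁ + 1 →
    ∀ (f : Q₁ → P) (g : Q₁ → Q₂), IsBqslEmb f → IsBqslEmb g →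
      ∃ h : Q₂ → P, IsBqslEmb h ∧ h ∘ g = f

theorem exists_eqOn_of_exhaustion {α β : Type*} {C : ℕ → Set α} {f : ℕ → α → β}
    (hmono : ∀ n, C n ⊆ C (n + 1)) (hcompat : ∀ n, EqOn (f n) (f (n + 1)) (C n))
    (hcov : ∀ x, ∃ n, x ∈ C n) :
    ∃ e : α → β, ∀ n, EqOn e (f n) (C n) := by
  have hcompat' : ∀ m n, m ≤ n → EqOn (f m) (f n) (C m) := by
    intro m n hmn
    induction n, hmn using Nat.le_induction with
    | base => exact eqOn_refl _ _
    | succ n hmn ih => exact ih.trans ((hcompat n).mono (monotone_nat_of_le_succ hmono hmn))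
  choose N hN using hcov
  refine ⟨fun x => f (N x) x, fun n x hx => ?_⟩
  rcases le_total (N x) n with h | h
  · exact hcompat' _ _ h (hN x)
  · exact (hcompat' _ _ h hx).symm

section Closed

variable {α : Type} [PartialOrder α]

def IsMLBClosed (T : Set α) : Prop := ∀ p ∈ T, ∀ q ∈ T, MLB p q ⊆ T

theorem mem_MLB_subtype_iff (hqsl : IsQSL α) {T : Set α} (hT : IsMLBClosed T)
    (p q r : T) : r ∈ MLB p q ↔ (r : α) ∈ MLB (p : α) q := by
  constructor
  · rintro ⟨hrp, hrq, hmax⟩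
    obtain ⟨s, hs, hrs⟩ := (hqsl p q).2 r hrp hrq
    have : r = ⟨s, hT p p.2 q q.2 hs⟩ := hmax _ hs.1 hs.2.1 hrs
    rwa [this]
  · rintro ⟨hrp, hrq, hmax⟩
    exact ⟨hrp, hrq, fun s hsp hsq hrs => Subtype.ext (hmax s hsp hsq hrs)⟩

theorem image_val_MLB (hqsl : IsQSL α) {T : Set α} (hT : IsMLBClosed T) (p q : T) :
    Subtype.val '' MLB p q = MLB (p : α) q := by
  ext x
  constructor
  · rintro ⟨r, hr, rfl⟩
    exact (mem_MLB_subtype_iff hqsl hT p q r).1 hr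
  · intro hx
    exact ⟨⟨x, hT p p.2 q q.2 hx⟩, (mem_MLB_subtype_iff hqsl hT p q _).2 hx, rfl⟩

theorem isQSL_subtype (hqsl : IsQSL α) {T : Set α} (hT : IsMLBClosed T) : IsQSL T := by
  intro p q
  refine ⟨Finite.of_finite_image ?_ Subtype.val_injective.injOn, fun r hrp hrq => ?_⟩
  · rw [image_val_MLB hqsl hT]
    exact (hqsl p q).1
  · obtain ⟨s, hs, hrs⟩ := (hqsl p q).2 r hrp hrq
    exact ⟨⟨s, hT p p.2 q q.2 hs⟩, (mem_MLB_subtype_iff hqsl hT p q _).2 hs, hrs⟩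

theorem MLB_self (p : α) : MLB p p = {p} :=
  eq_singleton_iff_unique_mem.2
    ⟨⟨le_rfl, le_rfl, fun _ hs _ hps => le_antisymm hps hs⟩, fun _ hr =>
      hr.2.2 p le_rfl le_rfl hr.1⟩

theorem exists_mem_diff_isMLBClosed_diff_singleton {S T : Set α} (hS : IsMLBClosed S)
    (hT : IsMLBClosed T) (hTfin : T.Finite) (hne : (T \ S).Nonempty) :
    ∃ t ∈ T \ S, IsMLBClosed (T \ {t}) := by
  obtain ⟨t, ht, hmax⟩ := hTfin.sdiff.exists_maximalFor id (T \ S) hne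
  refine ⟨t, ht, fun p hp q hq r hr => ⟨hT p hp.1 q hq.1 hr, ?_⟩⟩
  rintro rfl
  have below_of_notMem : ∀ a ∈ T \ {r}, r ≤ a → a ∈ S := fun a ha hra => by
    by_contra haS
    exact ha.2 (le_antisymm (hmax ⟨ha.1, haS⟩ hra) hra)
  exact ht.2 (hS p (below_of_notMem p hp hr.1) q (below_of_notMem q hq hr.2.1) hr)

end Closed

section Embedding

variable {α β : Type} [PartialOrder α] [OrderBot α] [PartialOrder β] [OrderBot β]

def IsBqslEmbOn (S : Set α) (f : α → β) : Prop :=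
  (∀ a ∈ S, ∀ b ∈ S, f a ≤ f b ↔ a ≤ b) ∧ f ⊥ = ⊥ ∧
    ∀ p ∈ S, ∀ q ∈ S, f '' MLB p q = MLB (f p) (f q)

theorem isBqslEmbOn_iff (hqsl : IsQSL α) {S : Set α} (hS : IsMLBClosed S) (hb : ⊥ ∈ S)
    (f : α → β) :
    IsBqslEmbOn S f ↔ @IsBqslEmb S β _ (Subtype.orderBot hb) _ _ (S.domRestrict f) := by
  have himage : ∀ p q : S, S.domRestrict f '' MLB p q = f '' MLB (p : α) q := fun p q => by
    rw [domRestrict_eq, image_comp, image_val_MLB hqsl hS]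
  simp only [IsBqslEmbOn, IsBqslEmb, himage, Subtype.forall, domRestrict_apply,
    Subtype.mk_le_mk]
  rfl

theorem isBqslEmb_inclusion (hqsl : IsQSL α) {S T : Set α} (hS : IsMLBClosed S)
    (hT : IsMLBClosed T) (hb : ⊥ ∈ S) (hST : S ⊆ T) :
    @IsBqslEmb S T _ (Subtype.orderBot hb) _ (Subtype.orderBot (hST hb)) (inclusion hST) := by
  refine ⟨fun _ _ => Iff.rfl, rfl, fun p q => ?_⟩
  apply (image_injective.2 Subtype.val_injective)
  rw [← image_comp, val_comp_inclusion, image_val_MLB hqsl hS, image_val_MLB hqsl hT]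

theorem exists_extension_insert (hqsl : IsQSL α) (hP : OnePointExtensionProperty β)
    {T : Set α} {t : α} (hTfin : T.Finite) (ht : t ∉ T) (hT : IsMLBClosed T)
    (hT' : IsMLBClosed (insert t T)) (hb : ⊥ ∈ T) {f : α → β} (hf : IsBqslEmbOn T f) :
    ∃ g : α → β, IsBqslEmbOn (insert t T) g ∧ EqOn f g T := by
  classical
  let := hTfin.fintype
  let := (hTfin.insert t).fintype
  let : OrderBot T := Subtype.orderBot hb
  let : OrderBot (insert t T : Set α) := Subtype.orderBot (mem_insert_of_mem t hb)
  obtain ⟨h, hh, hhf⟩ := hP T (insert t T : Set α) (isQSL_subtype hqsl hT)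
    (isQSL_subtype hqsl hT') (card_insert T ht) (T.domRestrict f)
    (inclusion (subset_insert t T)) ((isBqslEmbOn_iff hqsl hT hb f).1 hf)
    (isBqslEmb_inclusion hqsl hT hT' hb (subset_insert t T))
  let g : α → β := fun x => if hx : x ∈ insert t T then h ⟨x, hx⟩ else f x
  have hg : (insert t T).domRestrict g = h := domRestrict_dite _ _
  refine ⟨g, (isBqslEmbOn_iff hqsl hT' _ g).2 (hg ▸ hh), fun x hx => ?_⟩
  calc f x = h (inclusion (subset_insert t T) ⟨x, hx⟩) := (congrFun hhf ⟨x, hx⟩).symm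
    _ = g x := (dif_pos (mem_insert_of_mem t hx) : g x = _).symm

theorem exists_extension (hqsl : IsQSL α) (hP : OnePointExtensionProperty β) {S T : Set α}
    (hTfin : T.Finite) (hS : IsMLBClosed S) (hT : IsMLBClosed T) (hST : S ⊆ T) (hb : ⊥ ∈ S)
    {f : α → β} (hf : IsBqslEmbOn S f) :
    ∃ g : α → β, IsBqslEmbOn T g ∧ EqOn f g S := by
  obtain ⟨n, hn⟩ : ∃ n, (T \ S).ncard = n := ⟨_, rfl⟩
  induction n generalizing T with
  | zero =>
    obtain rfl : T = S :=
      subset_antisymm (sdiff_eq_empty.1 ((ncard_eq_zero hTfin.sdiff).1 hn)) hST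
    exact ⟨f, hf, eqOn_refl f T⟩
  | succ n ih =>
    obtain ⟨t, ht, hTt⟩ := exists_mem_diff_isMLBClosed_diff_singleton hS hT hTfin
      (nonempty_of_ncard_ne_zero (by omega))
    have hSt : S ⊆ T \ {t} := fun x hx => ⟨hST hx, fun hxt => ht.2 (hxt ▸ hx)⟩
    obtain ⟨g', hg', hfg'⟩ := ih hTfin.sdiff hTt hSt (by
      rw [sdiff_sdiff_comm, ncard_sdiff_singleton_of_mem ht, hn, Nat.add_sub_cancel])
    have hins : insert t (T \ {t}) = T := insert_sdiff_self_of_mem ht.1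
    obtain ⟨g, hg, hg'g⟩ := exists_extension_insert hqsl hP hTfin.sdiff
      (fun h => h.2 (mem_singleton t)) hTt (by rwa [hins]) (hSt hb) hg'
    exact ⟨g, hins ▸ hg, hfg'.trans (hg'g.mono hSt)⟩

theorem isBqslEmb_of_eqOn_exhaustion {C : ℕ → Set α} {f : ℕ → α → β} {e : α → β}
    (hC : ∀ n, IsMLBClosed (C n)) (hf : ∀ n, IsBqslEmbOn (C n) (f n))
    (hmono : ∀ n, C n ⊆ C (n + 1)) (hcov : ∀ x, ∃ n, x ∈ C n)
    (he : ∀ n, EqOn e (f n) (C n)) : IsBqslEmb e := by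
  have hpair : ∀ a b, ∃ n, a ∈ C n ∧ b ∈ C n := fun a b => by
    obtain ⟨m, ha⟩ := hcov a
    obtain ⟨k, hb⟩ := hcov b
    exact ⟨max m k, monotone_nat_of_le_succ hmono (le_max_left m k) ha,
      monotone_nat_of_le_succ hmono (le_max_right m k) hb⟩
  refine ⟨fun a b => ?_, ?_, fun p q => ?_⟩
  · obtain ⟨n, ha, hb⟩ := hpair a b
    rw [he n ha, he n hb]
    exact (hf n).1 a ha b hb
  · obtain ⟨n, hn⟩ := hcov ⊥
    rw [he n hn]
    exact (hf n).2.1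
  · obtain ⟨n, hp, hq⟩ := hpair p q
    rw [((he n).mono (hC n p hp q hq)).image_eq, he n hp, he n hq]
    exact (hf n).2.2 p hp q hq

end Embedding

structure FinPartialBqslEmb (α β : Type) [PartialOrder α] [OrderBot α] [PartialOrder β]
    [OrderBot β] where
  dom : Set α
  toFun : α → β
  finite_dom : dom.Finite
  isMLBClosed_dom : IsMLBClosed dom
  bot_mem : ⊥ ∈ dom
  isBqslEmbOn : IsBqslEmbOn dom toFun

namespace FinPartialBqslEmb

variable {α β : Type} [PartialOrder α] [OrderBot α] [PartialOrder β] [OrderBot β]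

def bot : FinPartialBqslEmb α β where
  dom := {⊥}
  toFun := fun _ => ⊥
  finite_dom := finite_singleton ⊥
  isMLBClosed_dom := by
    rintro p rfl q rfl
    rw [MLB_self]
  bot_mem := rfl
  isBqslEmbOn := by
    refine ⟨?_, rfl, ?_⟩
    · rintro a rfl b rfl
      simp only [le_refl]
    · rintro p rfl q rfl
      rw [MLB_self, MLB_self, image_singleton]

theorem exists_extend (hqsl : IsQSL α) (hlf : IsLocFinQSL α)
    (hP : OnePointExtensionProperty β) (φ : FinPartialBqslEmb α β) (x : α) :
    ∃ ψ : FinPartialBqslEmb α β, insert x φ.dom ⊆ ψ.dom ∧ EqOn φ.toFun ψ.toFun φ.dom := by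
  obtain ⟨T, hTfin, hxT, hT⟩ := hlf _ (φ.finite_dom.insert x)
  have hdomT : φ.dom ⊆ T := (subset_insert x _).trans hxT
  obtain ⟨g, hg, hfg⟩ := exists_extension hqsl hP hTfin φ.isMLBClosed_dom hT hdomT φ.bot_mem
    φ.isBqslEmbOn
  exact ⟨⟨T, g, hTfin, hT, hdomT φ.bot_mem, hg⟩, hxT, hfg⟩

end FinPartialBqslEmb

theorem stmt_15_general {P : Type} [PartialOrder P] [OrderBot P]
    (hext : ∀ (Q₁ Q₂ : Type) [Fintype Q₁] [PartialOrder Q₁] [OrderBot Q₁]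
      [Fintype Q₂] [PartialOrder Q₂] [OrderBot Q₂],
      IsQSL Q₁ → IsQSL Q₂ →
      Fintype.card Q₂ = Fintype.card Q₁ + 1 →
      ∀ (f : Q₁ → P) (g : Q₁ → Q₂), IsBqslEmb f → IsBqslEmb g →
        ∃ h : Q₂ → P, IsBqslEmb h ∧ h ∘ g = f) :
    ∀ (X : Type) [PartialOrder X] [OrderBot X] [Countable X],
      IsQSL X → IsLocFinQSL X → ∃ e : X → P, IsBqslEmb e := by
  intro X _ _ _ hqslX hlfX
  obtain ⟨u, hu⟩ := exists_surjective_nat X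
  choose next hnext using FinPartialBqslEmb.exists_extend hqslX hlfX hext
  let φ : ℕ → FinPartialBqslEmb X P := fun n => n.rec .bot fun k ψ => next ψ (u k)
  have hmono : ∀ n, (φ n).dom ⊆ (φ (n + 1)).dom := fun n =>
    (subset_insert _ _).trans (hnext (φ n) (u n)).1
  have hcov : ∀ x, ∃ n, x ∈ (φ n).dom := fun x => by
    obtain ⟨n, rfl⟩ := hu x
    exact ⟨n + 1, (hnext (φ n) (u n)).1 (mem_insert _ _)⟩
  obtain ⟨e, he⟩ := exists_eqOn_of_exhaustion hmono (fun n => (hnext (φ n) (u n)).2) hcov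
  exact ⟨e, isBqslEmb_of_eqOn_exhaustion (fun n => (φ n).isMLBClosed_dom)
    (fun n => (φ n).isBqslEmbOn) hmono hcov he⟩

/-- If a countable bounded locally finite quasisemilattice `P` has the one-point
extension property for finite sub-bqsls, then `P` embeds every countable bounded
locally finite quasisemilattice. -/
theorem stmt_15 {P : Type} [PartialOrder P] [OrderBot P] [Countable P]
    (hqsl : IsQSL P) (hlf : IsLocFinQSL P)
    (hext : ∀ (Q₁ Q₂ : Type) [Fintype Q₁] [PartialOrder Q₁] [OrderBot Q₁]
      [Fintype Q₂] [PartialOrder Q₂] [OrderBot Q₂],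
      IsQSL Q₁ → IsQSL Q₂ →
      Fintype.card Q₂ = Fintype.card Q₁ + 1 →
      ∀ (f : Q₁ → P) (g : Q₁ → Q₂), IsBqslEmb f → IsBqslEmb g →
        ∃ h : Q₂ → P, IsBqslEmb h ∧ h ∘ g = f) :
    ∀ (X : Type) [PartialOrder X] [OrderBot X] [Countable X],
      IsQSL X → IsLocFinQSL X → ∃ e : X → P, IsBqslEmb e :=
  stmt_15_general hext
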